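/- arXiv:1209.1760 — 5 statements merged into one kernel-verified Lean document; each statement's English description precedes it below -/
import Mathlib

section
/- Let A be an infinite alphabet, Σ_A the set of all finite and infinite sequences over A, and Q : X_A → Σ_A the map sending a sequence over A_∞ to its initial segment before the first occurrence of ∞ (the whole sequence if ∞ never occurs). Then the set G = {(x,y) ∈ X_A × X_A : Q(x) = Q(y)} is a closed subset of X_A × X_A, and consequently Σ_A with the quotient topology is a compact Hausdorff space. -/
open Topology Filter Set

noncomputable section

/-- The set of finite and infinite sequences over the alphabet `A`, encoded as
functions `ℕ → Option A` which, once `none`, stay `none`. -/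
def Sig (A : Type*) : Type _ :=
  {f : ℕ → Option A // ∀ n, f n = none → f (n + 1) = none}

namespace Sig

variable {A : Type*}

/-- The empty sequence `0⃗`. -/
def nil : Sig A := ⟨fun _ => none, fun _ _ => rfl⟩

/-- The length of a sequence, an extended natural number. -/
def len (x : Sig A) : ℕ∞ := sInf {n : ℕ∞ | ∃ k : ℕ, n = (k : ℕ∞) ∧ x.1 k = none}

/-- The finite sequence determined by a list. -/
def ofList (w : List A) : Sig A :=
  ⟨fun n => w[n]?, fun n h => by
    rw [List.getElem?_eq_none_iff] at h ⊢
    omega⟩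

/-- The shift map: delete the first entry. -/
def shift (x : Sig A) : Sig A := ⟨fun n => x.1 (n + 1), fun n h => x.2 _ h⟩

/-- The cylinder set `Z(w)` of all sequences beginning with the finite word `w`. -/
def cyl (w : List A) : Set (Sig A) := {z | ∀ i < w.length, z.1 i = w[i]?}

/-- The generalized cylinder set `Z(w, F)`. -/
def cylF (w : List A) (F : Set A) : Set (Sig A) := cyl w \ ⋃ a ∈ F, cyl (w ++ [a])

/-- The space `X_A = A_∞^ℕ` where `A_∞` is the one-point compactification of the
discrete space `A`. -/
def XA (A : Type*) : Type _ := ℕ → OnePoint A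

instance (A : Type*) : TopologicalSpace (XA A) :=
  letI : TopologicalSpace A := ⊥
  inferInstanceAs (TopologicalSpace (ℕ → OnePoint A))

/-- View a point of `A_∞` as an `Option A` (they are definitionally equal). -/
def toOpt (y : OnePoint A) : Option A := y

open Classical in
/-- The quotient map `Q : X_A → Σ_A`, cutting a sequence over `A_∞` at the first
occurrence of `∞`. -/
def Q (x : XA A) : Sig A :=
  ⟨fun n => if ∃ i ≤ n, x i = OnePoint.infty then none else toOpt (x n), by
    intro n h
    dsimp only at h ⊢
    by_cases hex : ∃ i ≤ n, x i = OnePoint.infty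
    · obtain ⟨i, hi, hxi⟩ := hex
      exact if_pos ⟨i, hi.trans (Nat.le_succ n), hxi⟩
    · rw [if_neg hex] at h
      have : x n = OnePoint.infty := h
      exact absurd ⟨n, le_refl n, this⟩ hex⟩

/-- The quotient topology on `Σ_A` induced by `Q`. -/
instance (A : Type*) : TopologicalSpace (Sig A) :=
  TopologicalSpace.coinduced Q inferInstance

/-- `w` occurs as a subblock of the sequence `x`. -/
def IsSubblock (w : List A) (x : Sig A) : Prop :=
  ∃ k, ∀ i < w.length, x.1 (k + i) = w[i]?

/-- The set of blocks (finite subwords) of elements of `X`. -/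
def blocks (X : Set (Sig A)) : Set (List A) := {w | ∃ x ∈ X, IsSubblock w x}

/-- A shift space: closed, shift invariant, with the infinite-extension property. -/
def IsShiftSpace (X : Set (Sig A)) : Prop :=
  IsClosed X ∧ (∀ x ∈ X, shift x ∈ X) ∧
    ∀ w : List A, ofList w ∈ X → {a : A | (X ∩ cyl (w ++ [a])).Nonempty}.Infinite

/-- A shift space is row-finite if every symbol can be followed by only finitely
many symbols. -/
def RowFinite (X : Set (Sig A)) : Prop := ∀ a : A, {b : A | [a, b] ∈ blocks X}.Finite

/-- The set of infinite sequences avoiding all blocks from `F`. -/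
def XFinf (F : Set (List A)) : Set (Sig A) :=
  {x | len x = ⊤ ∧ ∀ w ∈ F, ¬ IsSubblock w x}

/-- The set of finite sequences with infinitely many extensions into `X_F^inf`. -/
def XFfin (F : Set (List A)) : Set (Sig A) :=
  {x | ∃ w : List A, x = ofList w ∧
    {a : A | (XFinf F ∩ cyl (w ++ [a])).Nonempty}.Infinite}

/-- The shift space `X_F` determined by the forbidden blocks `F`. -/
def XF (F : Set (List A)) : Set (Sig A) := XFinf F ∪ XFfin F

end Sig




section Helpers

variable {A : Type*}

lemma sig_none_mono (f : Sig A) {i n : ℕ} (h : i ≤ n) (hi : f.1 i = none) :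
    f.1 n = none := by
  induction h with
  | refl => exact hi
  | step h ih => exact f.2 _ ih

open Classical in
lemma q_apply (x : Sig.XA A) (n : ℕ) :
    (Sig.Q x).1 n =
      if ∃ i ≤ n, x i = OnePoint.infty then none else Sig.toOpt (x n) := rfl

lemma toOpt_inj {y z : OnePoint A} (h : Sig.toOpt y = Sig.toOpt z) : y = z := h

lemma toOpt_infty : Sig.toOpt (OnePoint.infty : OnePoint A) = none := rfl

lemma toOpt_ne_none {y : OnePoint A} (h : y ≠ OnePoint.infty) :
    Sig.toOpt y ≠ none := fun hc => h (toOpt_inj (hc.trans toOpt_infty.symm))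

lemma q_apply_of_ne (x : Sig.XA A) (n : ℕ)
    (h : ∀ i ≤ n, x i ≠ OnePoint.infty) : (Sig.Q x).1 n = Sig.toOpt (x n) := by
  classical
  rw [q_apply, if_neg]
  rintro ⟨i, hi, hxi⟩
  exact h i hi hxi

lemma q_apply_of_infty (x : Sig.XA A) {n : ℕ} (i : ℕ) (hi : i ≤ n)
    (h : x i = OnePoint.infty) : (Sig.Q x).1 n = none := by
  classical
  rw [q_apply, if_pos ⟨i, hi, h⟩]

lemma q_surj : Function.Surjective (Sig.Q (A := A)) := by
  intro f
  refine ⟨fun n => (f.1 n : Option A), Subtype.ext (funext fun n => ?_)⟩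
  rcases hfn : f.1 n with _ | a
  · exact q_apply_of_infty _ n le_rfl hfn
  · have : ∀ i ≤ n, (f.1 i : OnePoint A) ≠ OnePoint.infty := by
      intro i hi hc
      have : f.1 n = none := sig_none_mono f hi hc
      rw [hfn] at this; exact Option.some_ne_none a this
    rw [q_apply_of_ne _ n this]
    show f.1 n = Option.some a
    exact hfn

lemma singleton_open_of_ne_infty {A : Type*} [TopologicalSpace A] [DiscreteTopology A]
    {z : OnePoint A} (h : z ≠ OnePoint.infty) : IsOpen ({z} : Set (OnePoint A)) := by
  induction z using OnePoint.rec with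
  | infty => exact absurd rfl h
  | coe a =>
    rw [← Set.image_singleton]
    exact OnePoint.isOpen_image_coe.2 (isOpen_discrete _)

end Helpers

/-- the set `G = {(x,y) : Q x = Q y}` is closed in `X_A × X_A`, and
consequently `Σ_A` with the quotient topology is compact Hausdorff. -/
theorem stmt1 (A : Type*) [Infinite A] :
    IsClosed {p : Sig.XA A × Sig.XA A | Sig.Q p.1 = Sig.Q p.2} ∧
      CompactSpace (Sig A) ∧ T2Space (Sig A) := by
  classical
  letI : TopologicalSpace A := ⊥
  haveI : DiscreteTopology A := ⟨rfl⟩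
  haveI : CompactSpace (Sig.XA A) := inferInstanceAs (CompactSpace (ℕ → OnePoint A))
  haveI : T2Space (Sig.XA A) := inferInstanceAs (T2Space (ℕ → OnePoint A))
  haveI : NormalSpace (Sig.XA A) := inferInstance
  have hQcont : Continuous (Sig.Q (A := A)) := continuous_coinduced_rng
  -- the key auxiliary neighbourhood lemma
  have aux : ∀ (x y : Sig.XA A) (n : ℕ),
      (∀ i < n, x i ≠ OnePoint.infty ∧ y i ≠ OnePoint.infty ∧ x i = y i) →
      y n ≠ OnePoint.infty → x n ≠ y n →
      ∃ U ∈ 𝓝 x, ∃ V ∈ 𝓝 y, ∀ u ∈ U, ∀ v ∈ V, Sig.Q u ≠ Sig.Q v := by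
    intro x y n hlow hyn hxyn
    refine ⟨(Set.Iic n).pi (fun i => if i < n then {x i} else {y n}ᶜ), ?_,
            (Set.Iic n).pi (fun i => if i < n then {y i} else {y n}), ?_, ?_⟩
    · refine set_pi_mem_nhds (Set.finite_Iic n) fun i hi => ?_
      by_cases h : i < n
      · rw [if_pos h]
        exact (singleton_open_of_ne_infty (hlow i h).1).mem_nhds rfl
      · rw [if_neg h]
        have : i = n := le_antisymm hi (not_lt.1 h)
        subst this
        exact isOpen_compl_singleton.mem_nhds hxyn
    · refine set_pi_mem_nhds (Set.finite_Iic n) fun i hi => ?_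
      by_cases h : i < n
      · rw [if_pos h]
        exact (singleton_open_of_ne_infty (hlow i h).2.1).mem_nhds rfl
      · rw [if_neg h]
        have : i = n := le_antisymm hi (not_lt.1 h)
        subst this
        exact (singleton_open_of_ne_infty hyn).mem_nhds rfl
    · intro u hu v hv hQ
      have hun : u n ≠ y n := by simpa using hu n (Set.mem_Iic.2 le_rfl)
      have hvn : v n = y n := by simpa using hv n (Set.mem_Iic.2 le_rfl)
      have hul : ∀ i < n, u i = x i := fun i hi => by
        simpa [hi] using hu i (Set.mem_Iic.2 hi.le)
      have hvl : ∀ i < n, v i = y i := fun i hi => by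
        simpa [hi] using hv i (Set.mem_Iic.2 hi.le)
      have hvne : ∀ i ≤ n, v i ≠ OnePoint.infty := by
        intro i hi
        rcases lt_or_eq_of_le hi with h | h
        · rw [hvl i h]; exact (hlow i h).2.1
        · subst h; rw [hvn]; exact hyn
      have hQv : (Sig.Q v).1 n = Sig.toOpt (y n) := by
        rw [q_apply_of_ne v n hvne, hvn]
      have hQn : (Sig.Q u).1 n = (Sig.Q v).1 n := by rw [hQ]
      rw [hQv] at hQn
      by_cases hex : ∃ i ≤ n, u i = OnePoint.infty
      · obtain ⟨i, hi, hui⟩ := hex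
        rw [q_apply_of_infty u i hi hui] at hQn
        exact toOpt_ne_none hyn hQn.symm
      · push_neg at hex
        rw [q_apply_of_ne u n hex] at hQn
        exact hun (toOpt_inj hQn)
  -- G is closed
  have hG : IsClosed {p : Sig.XA A × Sig.XA A | Sig.Q p.1 = Sig.Q p.2} := by
    rw [← isOpen_compl_iff, isOpen_iff_mem_nhds]
    rintro ⟨x, y⟩ hp
    simp only [Set.mem_compl_iff, Set.mem_setOf_eq] at hp
    have hex : ∃ n, (Sig.Q x).1 n ≠ (Sig.Q y).1 n := by
      by_contra h
      push_neg at h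
      exact hp (Subtype.ext (funext h))
    set n := Nat.find hex with hndef
    have hn : (Sig.Q x).1 n ≠ (Sig.Q y).1 n := Nat.find_spec hex
    have hmin : ∀ i < n, (Sig.Q x).1 i = (Sig.Q y).1 i := fun i hi => by
      by_contra h
      exact absurd (Nat.find_le h) (not_le.2 hi)
    have hlow : ∀ i < n, x i ≠ OnePoint.infty ∧ y i ≠ OnePoint.infty ∧ x i = y i := by
      intro i hi
      have hxi : (Sig.Q x).1 i ≠ none := by
        intro hc
        exact hn ((sig_none_mono _ hi.le hc).trans
          (sig_none_mono _ hi.le ((hmin i hi) ▸ hc)).symm)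
      have hxne : ∀ j ≤ i, x j ≠ OnePoint.infty := by
        intro j hj hc
        exact hxi (q_apply_of_infty x j hj hc)
      have hyi : (Sig.Q y).1 i ≠ none := (hmin i hi) ▸ hxi
      have hyne : ∀ j ≤ i, y j ≠ OnePoint.infty := by
        intro j hj hc
        exact hyi (q_apply_of_infty y j hj hc)
      refine ⟨hxne i le_rfl, hyne i le_rfl, ?_⟩
      have := hmin i hi
      rw [q_apply_of_ne x i hxne, q_apply_of_ne y i hyne] at this
      exact toOpt_inj this
    have key : ∃ U ∈ 𝓝 x, ∃ V ∈ 𝓝 y, ∀ u ∈ U, ∀ v ∈ V, Sig.Q u ≠ Sig.Q v := by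
      by_cases hy : y n = OnePoint.infty
      · -- then x n ≠ ∞; apply aux with roles swapped
        have hx : x n ≠ OnePoint.infty := by
          intro hc
          exact hn ((q_apply_of_infty x n le_rfl hc).trans
            (q_apply_of_infty y n le_rfl hy).symm)
        have hyx : y n ≠ x n := fun hc => hx (hc ▸ hy)
        obtain ⟨U, hU, V, hV, h⟩ := aux y x n
          (fun i hi => ⟨(hlow i hi).2.1, (hlow i hi).1, (hlow i hi).2.2.symm⟩) hx hyx
        exact ⟨V, hV, U, hU, fun u hu v hv hc => h v hv u hu hc.symm⟩
      · have hxyn : x n ≠ y n := by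
          intro hc
          by_cases hx : x n = OnePoint.infty
          · exact hy (hc ▸ hx)
          · have hxne : ∀ j ≤ n, x j ≠ OnePoint.infty := by
              intro j hj
              rcases lt_or_eq_of_le hj with h' | h'
              · exact (hlow j h').1
              · subst h'; exact hx
            have hyne : ∀ j ≤ n, y j ≠ OnePoint.infty := by
              intro j hj
              rcases lt_or_eq_of_le hj with h' | h'
              · exact (hlow j h').2.1
              · subst h'; exact hy
            exact hn (by rw [q_apply_of_ne x n hxne, q_apply_of_ne y n hyne, hc])
        exact aux x y n hlow hy hxyn
    obtain ⟨U, hU, V, hV, h⟩ := key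
    refine Filter.mem_of_superset (prod_mem_nhds hU hV) ?_
    rintro ⟨u, v⟩ ⟨hu, hv⟩
    exact h u hu v hv
  -- compactness of Sig A
  haveI hcomp : CompactSpace (Sig A) := by
    refine ⟨?_⟩
    have : (Set.univ : Set (Sig A)) = Sig.Q '' Set.univ := by
      rw [Set.image_univ, q_surj.range_eq]
    rw [this]
    exact isCompact_univ.image hQcont
  -- Q is a closed map
  have hQclosed : ∀ C : Set (Sig.XA A), IsClosed C → IsClosed (Sig.Q '' C) := by
    intro C hC
    have hpre : Sig.Q ⁻¹' (Sig.Q '' C) =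
        Prod.fst '' ({p : Sig.XA A × Sig.XA A | Sig.Q p.1 = Sig.Q p.2} ∩
          Set.univ ×ˢ C) := by
      ext z
      constructor
      · rintro ⟨w, hw, hQw⟩
        exact ⟨(z, w), ⟨hQw.symm, Set.mem_univ _, hw⟩, rfl⟩
      · rintro ⟨⟨z', w⟩, ⟨hQw, _, hw⟩, rfl⟩
        exact ⟨w, hw, hQw.symm⟩
    rw [← isOpen_compl_iff, isOpen_coinduced, Set.preimage_compl, isOpen_compl_iff, hpre]
    exact (((hG.inter (isClosed_univ.prod hC)).isCompact).image continuous_fst).isClosed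
  -- Hausdorffness of Sig A
  haveI ht2 : T2Space (Sig A) := by
    refine ⟨fun a b hab => ?_⟩
    obtain ⟨xa, hxa⟩ := q_surj a
    obtain ⟨xb, hxb⟩ := q_surj b
    have hFa : IsClosed (Sig.Q ⁻¹' {a} : Set (Sig.XA A)) := by
      have : (Sig.Q ⁻¹' {a} : Set (Sig.XA A)) =
          (fun z => (z, xa)) ⁻¹' {p : Sig.XA A × Sig.XA A | Sig.Q p.1 = Sig.Q p.2} := by
        ext z; simp [hxa]
      rw [this]
      exact hG.preimage (continuous_id.prodMk continuous_const)
    have hFb : IsClosed (Sig.Q ⁻¹' {b} : Set (Sig.XA A)) := by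
      have : (Sig.Q ⁻¹' {b} : Set (Sig.XA A)) =
          (fun z => (z, xb)) ⁻¹' {p : Sig.XA A × Sig.XA A | Sig.Q p.1 = Sig.Q p.2} := by
        ext z; simp [hxb]
      rw [this]
      exact hG.preimage (continuous_id.prodMk continuous_const)
    have hdisj : Disjoint (Sig.Q ⁻¹' {a}) (Sig.Q ⁻¹' {b}) := by
      rw [Set.disjoint_left]
      intro z hza hzb
      exact hab (hza.symm.trans hzb)
    obtain ⟨U, V, hUo, hVo, hFaU, hFbV, hUV⟩ := NormalSpace.normal _ _ hFa hFb hdisj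
    refine ⟨(Sig.Q '' Uᶜ)ᶜ, (Sig.Q '' Vᶜ)ᶜ, (hQclosed _ hUo.isClosed_compl).isOpen_compl,
      (hQclosed _ hVo.isClosed_compl).isOpen_compl, ?_, ?_, ?_⟩
    · rintro ⟨w, hw, hQw⟩
      exact hw (hFaU (by simp [hQw]))
    · rintro ⟨w, hw, hQw⟩
      exact hw (hFbV (by simp [hQw]))
    · rw [Set.disjoint_left]
      rintro c hcU hcV
      obtain ⟨z, rfl⟩ := q_surj c
      have hzU : z ∈ U := by
        by_contra h
        exact hcU ⟨z, h, rfl⟩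
      have hzV : z ∈ V := by
        by_contra h
        exact hcV ⟨z, h, rfl⟩
      exact Set.disjoint_left.1 hUV hzU hzV
  exact ⟨hG, hcomp, ht2⟩
end
end

section
/- For every finite sequence x ∈ Σ_A^fin and every finite subset F ⊆ A, the generalized cylinder set Z(x,F) := Z(x) \ ⋃_{e∈F} Z(xe) is a compact open subset of Σ_A. In particular, every cylinder set Z(x) is clopen in Σ_A. -/
open Topology Filter Set

noncomputable section

namespace Sig

variable {A : Type*}

theorem stay_none (z : Sig A) {i n : ℕ} (h : i ≤ n) (hi : z.1 i = none) :
    z.1 n = none := by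
  induction n, h using Nat.le_induction with
  | base => exact hi
  | succ n _ ih => exact z.2 n ih

theorem Q_surj : Function.Surjective (Q : XA A → Sig A) := by
  intro z
  refine ⟨fun n => (z.1 n).elim OnePoint.infty OnePoint.some, ?_⟩
  apply Subtype.ext
  funext n
  simp only [Q]
  have key : ∀ m, ((z.1 m).elim OnePoint.infty OnePoint.some = OnePoint.infty) ↔
      z.1 m = none := by
    intro m; cases h : z.1 m <;> simp [OnePoint.infty, OnePoint.some]
    · rfl
    · exact fun h' => Option.some_ne_none _ h'
  split_ifs with h
  · obtain ⟨i, hin, hi⟩ := h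
    exact (stay_none z hin ((key i).1 hi)).symm
  · cases z.1 n <;> rfl

theorem isClopen_preimage_cyl (w : List A) :
    IsClopen (Q ⁻¹' cyl w : Set (XA A)) := by
  letI : TopologicalSpace A := ⊥
  haveI : DiscreteTopology A := ⟨rfl⟩
  have hset : (Q ⁻¹' cyl w : Set (XA A)) =
      ⋂ i : Fin w.length, (fun x : XA A => x i) ⁻¹' {OnePoint.some (w[(i : ℕ)])} := by
    ext x
    simp only [Set.mem_preimage, Set.mem_iInter, Set.mem_singleton_iff, cyl,
      Set.mem_setOf_eq]
    constructor
    · intro h i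
      have hi := h i i.2
      simp only [Q] at hi
      rw [List.getElem?_eq_getElem i.2] at hi
      split_ifs at hi with hex
      exact hi
    · intro h i hi
      simp only [Q]
      rw [if_neg, List.getElem?_eq_getElem hi]
      · have hx := h ⟨i, hi⟩
        rw [hx]
        rfl
      · rintro ⟨j, hj, hxj⟩
        have hx := h ⟨j, lt_of_le_of_lt hj hi⟩
        rw [hx] at hxj
        exact Option.some_ne_none _ hxj
  have hsing : ∀ a : A, IsClopen ({OnePoint.some a} : Set (OnePoint A)) := by
    intro a
    have himg : ({OnePoint.some a} : Set (OnePoint A)) = (↑) '' {a} := by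
      rw [Set.image_singleton]
    constructor
    · rw [himg, OnePoint.isClosed_image_coe]
      exact ⟨isClosed_singleton, isCompact_singleton⟩
    · rw [himg, OnePoint.isOpen_image_coe]
      exact isOpen_discrete _
  rw [hset]
  constructor
  · exact isClosed_iInter fun i =>
      (hsing _).1.preimage (continuous_apply (A := fun _ : ℕ => OnePoint A) (i : ℕ))
  · exact isOpen_iInter_of_finite fun i =>
      (hsing _).2.preimage (continuous_apply (A := fun _ : ℕ => OnePoint A) (i : ℕ))

theorem isClopen_cyl (w : List A) : IsClopen (cyl w : Set (Sig A)) := by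
  have h := isClopen_preimage_cyl (A := A) w
  constructor
  · rw [← isOpen_compl_iff, isOpen_coinduced, Set.preimage_compl]
    exact h.1.isOpen_compl
  · rw [isOpen_coinduced]
    exact h.2

instance : CompactSpace (XA A) := by
  letI : TopologicalSpace A := ⊥
  exact inferInstanceAs (CompactSpace (ℕ → OnePoint A))

instance : CompactSpace (Sig A) := by
  constructor
  have : (Set.univ : Set (Sig A)) = Q '' Set.univ := by
    rw [Set.image_univ, Set.range_eq_univ.mpr Q_surj]
  rw [this]
  exact CompactSpace.isCompact_univ.image continuous_coinduced_rng

end Sig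

/-- every generalized cylinder set `Z(w, F)` is compact open, and in
particular every cylinder set `Z(w)` is clopen in `Σ_A`. -/
theorem stmt2 (A : Type*) [Infinite A] (w : List A) (F : Finset A) :
    (IsCompact (Sig.cylF w (F : Set A)) ∧ IsOpen (Sig.cylF w (F : Set A))) ∧
      IsClopen (Sig.cyl w) := by
  have hU : IsClopen (⋃ a ∈ (F : Set A), Sig.cyl (w ++ [a]) : Set (Sig A)) := by
    constructor
    · exact Set.Finite.isClosed_biUnion F.finite_toSet fun a _ => (Sig.isClopen_cyl _).1
    · exact isOpen_biUnion fun a _ => (Sig.isClopen_cyl _).2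
  have hcF : IsClopen (Sig.cylF w (F : Set A)) := by
    rw [Sig.cylF, Set.diff_eq]
    exact (Sig.isClopen_cyl w).inter hU.compl
  exact ⟨⟨hcF.1.isCompact, hcF.2⟩, Sig.isClopen_cyl w⟩
end
end

section
/- The map α : Σ_A → {0,1}^{Σ_A^fin} defined by α(x)(y) = 1 if x ∈ Z(y) and 0 otherwise is a topological embedding (a homeomorphism onto its image), where {0,1}^{Σ_A^fin} has the product topology. -/
open Topology Filter Set

noncomputable section

open Classical in
/-- The map `α : Σ_A → {0,1}^{Σ_A^fin}`, sending `x` to the indicator of the set of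
finite words `w` with `x ∈ Z(w)`. -/
noncomputable def alphaMap {A : Type*} (x : Sig A) : List A → Bool :=
  fun w => if x ∈ Sig.cyl w then true else false


section Aux

variable {A : Type*}

lemma Sig.stay_none_s3 (x : Sig A) : ∀ {i n : ℕ}, i ≤ n → x.1 i = none → x.1 n = none := by
  intro i n h hi
  induction n, h using Nat.le_induction with
  | base => exact hi
  | succ n hn ih => exact x.2 n ih

/-- Interpret an `Option A` as an element of `OnePoint A`. -/
def toOP : Option A → OnePoint A
  | none => OnePoint.infty
  | some a => (a : OnePoint A)

@[simp] lemma toOpt_toOP (o : Option A) : Sig.toOpt (toOP o) = o := by cases o <;> rfl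

lemma toOP_eq_infty {o : Option A} (h : toOP o = OnePoint.infty) : o = none := by
  cases o with
  | none => rfl
  | some a => exact absurd h (OnePoint.coe_ne_infty a)

lemma toOP_eq_coe {o : Option A} {a : A} (h : toOP o = (a : OnePoint A)) : o = some a := by
  cases o with
  | none => exact absurd h (OnePoint.infty_ne_coe a)
  | some b =>
    have hb : (b : OnePoint A) = (a : OnePoint A) := h
    rw [OnePoint.coe_eq_coe] at hb
    rw [hb]

lemma toOpt_eq_some {y : OnePoint A} {a : A} (h : Sig.toOpt y = some a) : y = (a : OnePoint A) := by
  induction y using OnePoint.rec with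
  | infty => exact absurd h.symm (Option.some_ne_none a)
  | coe b =>
    obtain rfl : b = a := Option.some.inj h
    rfl

/-- The canonical lift of a sequence to `X_A`. -/
def liftX (x : Sig A) : Sig.XA A := fun n => toOP (x.1 n)

open Classical in
lemma Q_apply (xt : Sig.XA A) (n : ℕ) :
    (Sig.Q xt).1 n = if ∃ i ≤ n, xt i = OnePoint.infty then none else Sig.toOpt (xt n) := rfl

lemma Q_liftX (x : Sig A) : Sig.Q (liftX x) = x := by
  apply Subtype.ext; funext n
  rw [Q_apply]
  by_cases h : ∃ i ≤ n, liftX x i = OnePoint.infty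
  · rw [if_pos h]
    obtain ⟨i, hin, hi⟩ := h
    exact (Sig.stay_none_s3 x hin (toOP_eq_infty hi)).symm
  · rw [if_neg h]
    exact toOpt_toOP _

/-- The prefix of a sequence, as a list. -/
def pref (x : Sig A) (n : ℕ) (h : ∀ i, i < n → (x.1 i).isSome) : List A :=
  List.ofFn fun i : Fin n => (x.1 i).get (h i i.2)

lemma length_pref (x : Sig A) (n : ℕ) (h : ∀ i, i < n → (x.1 i).isSome) :
    (pref x n h).length = n := List.length_ofFn

lemma pref_getElem? (x : Sig A) (n : ℕ) (h : ∀ i, i < n → (x.1 i).isSome) {i : ℕ}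
    (hi : i < n) : (pref x n h)[i]? = x.1 i := by
  rw [pref, List.getElem?_ofFn]
  simp only [List.ofFnNthVal, hi, dif_pos]
  exact Option.some_get _

lemma mem_cyl_pref (x : Sig A) (n : ℕ) (h : ∀ i, i < n → (x.1 i).isSome) :
    x ∈ Sig.cyl (pref x n h) := by
  intro i hi
  rw [length_pref] at hi
  exact (pref_getElem? x n h hi).symm

lemma eq_ofList_of_mem_cyl {w : List A} {y : Sig A} (hy : y ∈ Sig.cyl w)
    (h0 : y.1 w.length = none) : y = Sig.ofList w := by
  apply Subtype.ext; funext n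
  rcases lt_or_ge n w.length with hn | hn
  · exact hy n hn
  · have h1 : y.1 n = none := Sig.stay_none_s3 y hn h0
    have h2 : (Sig.ofList w).1 n = none := List.getElem?_eq_none hn
    rw [h1, h2]

lemma mem_cyl_concat {w : List A} {a : A} {y : Sig A} (hy : y ∈ Sig.cyl w)
    (ha : y.1 w.length = some a) : y ∈ Sig.cyl (w ++ [a]) := by
  intro i hi
  rw [List.length_append, List.length_singleton] at hi
  rcases lt_or_ge i w.length with h | h
  · rw [List.getElem?_append_left h]
    exact hy i h
  · have : i = w.length := by omega
    subst this
    rw [List.getElem?_concat_length]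
    exact ha

lemma alphaMap_eq_true {x : Sig A} {w : List A} : alphaMap x w = true ↔ x ∈ Sig.cyl w := by
  by_cases h : x ∈ Sig.cyl w <;> simp [alphaMap, h]

lemma alphaMap_eq_false {x : Sig A} {w : List A} : alphaMap x w = false ↔ x ∉ Sig.cyl w := by
  by_cases h : x ∈ Sig.cyl w <;> simp [alphaMap, h]

lemma op_open_coe {X : Type*} [TopologicalSpace X] [DiscreteTopology X] (a : X) :
    IsOpen ({(a : OnePoint X)} : Set (OnePoint X)) := by
  have := OnePoint.isOpen_image_coe (X := X) (s := {a})
  rw [Set.image_singleton] at this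
  exact this.mpr (isOpen_discrete _)

lemma op_closed {X : Type*} [TopologicalSpace X] [DiscreteTopology X] (p : OnePoint X) :
    IsClosed ({p} : Set (OnePoint X)) := by
  induction p using OnePoint.rec with
  | infty => rw [← isOpen_compl_iff, OnePoint.compl_infty]; exact OnePoint.isOpen_range_coe
  | coe a =>
    have := OnePoint.isClosed_image_coe (X := X) (s := {a})
    rw [Set.image_singleton] at this
    exact this.mpr ⟨isClosed_discrete _, isCompact_singleton⟩

lemma cluster_eq {X : Type*} [TopologicalSpace X] {c : X} (hc : IsClosed ({c} : Set X))
    {ι : Type*} {l : Filter ι} {v : ι → X} {p : X} (h : MapClusterPt p l v)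
    (hv : ∀ᶠ j in l, v j = c) : p = c := by
  have h1 : Filter.map v l ≤ 𝓟 ({c} : Set X) := le_principal_iff.mpr hv
  have h2 : ClusterPt p (𝓟 ({c} : Set X)) := h.clusterPt.mono h1
  have h3 : p ∈ closure ({c} : Set X) := mem_closure_iff_clusterPt.mpr h2
  rwa [hc.closure_eq, Set.mem_singleton_iff] at h3

lemma preimage_Q_cyl (w : List A) :
    Sig.Q ⁻¹' (Sig.cyl w) = ⋂ i ∈ Finset.range w.length,
      (fun f : Sig.XA A => f i) ⁻¹' {toOP (w[i]?)} := by
  ext xt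
  simp only [Set.mem_preimage, Set.mem_iInter, Finset.mem_range, Set.mem_singleton_iff]
  constructor
  · intro h i hi
    have hh := h i hi
    rw [Q_apply] at hh
    rw [List.getElem?_eq_getElem hi] at hh ⊢
    by_cases hc : ∃ j ≤ i, xt j = OnePoint.infty
    · rw [if_pos hc] at hh; exact absurd hh.symm (Option.some_ne_none _)
    · rw [if_neg hc] at hh
      exact toOpt_eq_some hh
  · intro h i hi
    show (Sig.Q xt).1 i = w[i]?
    rw [Q_apply, if_neg, h i hi, toOpt_toOP]
    rintro ⟨j, hji, hj⟩
    have hjlt : j < w.length := lt_of_le_of_lt hji hi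
    rw [h j hjlt, List.getElem?_eq_getElem hjlt] at hj
    exact OnePoint.coe_ne_infty _ hj

lemma isOpen_cyl (w : List A) : IsOpen (Sig.cyl w) := by
  letI : TopologicalSpace A := ⊥
  haveI : DiscreteTopology A := ⟨rfl⟩
  rw [isOpen_coinduced, preimage_Q_cyl]
  refine isOpen_biInter_finset fun i hi => ?_
  rw [Finset.mem_range] at hi
  rw [List.getElem?_eq_getElem hi]
  exact (continuous_apply i).isOpen_preimage _ (op_open_coe _)

lemma isClosed_cyl (w : List A) : IsClosed (Sig.cyl w) := by
  letI : TopologicalSpace A := ⊥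
  haveI : DiscreteTopology A := ⟨rfl⟩
  rw [← isOpen_compl_iff, isOpen_coinduced, Set.preimage_compl, preimage_Q_cyl]
  exact (isClosed_biInter fun i hi => (op_closed _).preimage (continuous_apply i)).isOpen_compl

lemma alpha_cont : Continuous (alphaMap (A := A)) := by
  apply continuous_pi
  intro w
  rw [continuous_discrete_rng]
  intro b
  cases b with
  | false =>
    have : (fun x : Sig A => alphaMap x w) ⁻¹' {false} = (Sig.cyl w)ᶜ := by
      ext x; simp only [Set.mem_preimage, Set.mem_singleton_iff, Set.mem_compl_iff]
      exact alphaMap_eq_false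
    rw [this]
    exact (isClosed_cyl w).isOpen_compl
  | true =>
    have : (fun x : Sig A => alphaMap x w) ⁻¹' {true} = Sig.cyl w := by
      ext x; simp only [Set.mem_preimage, Set.mem_singleton_iff]
      exact alphaMap_eq_true
    rw [this]
    exact isOpen_cyl w

lemma alpha_injective : Function.Injective (alphaMap (A := A)) := by
  have key : ∀ x y : Sig A, alphaMap x = alphaMap y → ∀ n a, x.1 n = some a → y.1 n = some a := by
    intro x y hxy n a hna
    have hs : ∀ i, i < n + 1 → (x.1 i).isSome := by
      intro i hi
      rw [Option.isSome_iff_ne_none]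
      intro hnone
      have : x.1 n = none := Sig.stay_none_s3 x (by omega) hnone
      rw [hna] at this; exact absurd this (Option.some_ne_none _)
    have hxw : x ∈ Sig.cyl (pref x (n + 1) hs) := mem_cyl_pref x (n + 1) hs
    have hyw : y ∈ Sig.cyl (pref x (n + 1) hs) := by
      have : alphaMap y (pref x (n + 1) hs) = true := by
        rw [← hxy]; exact alphaMap_eq_true.mpr hxw
      exact alphaMap_eq_true.mp this
    have := hyw n (by rw [length_pref]; omega)
    rw [pref_getElem? x (n + 1) hs (by omega), hna] at this
    exact this
  intro x y hxy
  apply Subtype.ext; funext n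
  cases hx : x.1 n with
  | some a => rw [key x y hxy n a hx]
  | none =>
    cases hy : y.1 n with
    | none => rfl
    | some b =>
      have := key y x hxy.symm n b hy
      rw [hx] at this
      exact absurd this.symm (Option.some_ne_none _)

/-- The key lemma: every open set of `Σ_A` is, around each of its points, a union of
generalized cylinder sets. -/
lemma exists_basic {U : Set (Sig A)} (hU : IsOpen U) {x : Sig A} (hx : x ∈ U) :
    ∃ (w : List A) (K : Finset A), x ∈ Sig.cyl w ∧ (∀ a ∈ K, x ∉ Sig.cyl (w ++ [a])) ∧
      ∀ y : Sig A, y ∈ Sig.cyl w → (∀ a ∈ K, y ∉ Sig.cyl (w ++ [a])) → y ∈ U := by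
  classical
  letI : TopologicalSpace A := ⊥
  haveI : DiscreteTopology A := ⟨rfl⟩
  haveI : CompactSpace (Sig.XA A) := inferInstanceAs (CompactSpace (ℕ → OnePoint A))
  have hQU : IsOpen (Sig.Q ⁻¹' U) := hU
  by_contra hcon
  push_neg at hcon
  by_cases hfin : ∃ m, x.1 m = none
  · -- `x` is a finite sequence
    set m := Nat.find hfin with hmdef
    have hm : x.1 m = none := Nat.find_spec hfin
    have hmin : ∀ i, i < m → x.1 i ≠ none := fun i hi => Nat.find_min hfin hi
    have hs : ∀ i, i < m → (x.1 i).isSome := fun i hi =>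
      Option.ne_none_iff_isSome.mp (hmin i hi)
    set w := pref x m hs with hwdef
    have hxw : x ∈ Sig.cyl w := mem_cyl_pref x m hs
    have hlen : w.length = m := length_pref x m hs
    have hxnot : ∀ a : A, x ∉ Sig.cyl (w ++ [a]) := by
      intro a hc
      have := hc w.length (by rw [List.length_append, List.length_singleton]; omega)
      rw [List.getElem?_concat_length, hlen, hm] at this
      exact absurd this.symm (Option.some_ne_none _)
    have hch : ∀ K : Finset A, ∃ y : Sig A, y ∈ Sig.cyl w ∧
        (∀ a ∈ K, y ∉ Sig.cyl (w ++ [a])) ∧ y ∉ U :=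
      fun K => hcon w K hxw (fun a _ => hxnot a)
    choose y hyc hyK hyU using hch
    have hb : ∀ K : Finset A, ∃ b : A, (y K).1 m = some b ∧ b ∉ K := by
      intro K
      cases hYm : (y K).1 m with
      | none =>
        exfalso
        have hxol : x = Sig.ofList w := eq_ofList_of_mem_cyl hxw (by rw [hlen]; exact hm)
        have hyol : y K = Sig.ofList w := eq_ofList_of_mem_cyl (hyc K) (by rw [hlen]; exact hYm)
        exact hyU K (by rw [hyol, ← hxol]; exact hx)
      | some b =>
        refine ⟨b, rfl, fun hbK => ?_⟩
        exact hyK K b hbK (mem_cyl_concat (hyc K) (by rw [hlen]; exact hYm))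
    choose b hbm hbK using hb
    set u : Finset A → Sig.XA A := fun K => liftX (y K) with hudef
    haveI : (Filter.map u Filter.atTop).NeBot := (Filter.atTop_neBot (α := Finset A)).map u
    obtain ⟨z, hz⟩ := exists_clusterPt_of_compactSpace (Filter.map u Filter.atTop)
    have hmz : MapClusterPt z Filter.atTop u := hz
    have hcoord : ∀ i, i < m → z i = toOP (x.1 i) := by
      intro i hi
      refine cluster_eq (op_closed _)
        (MapClusterPt.continuousAt_comp (f := fun p : Sig.XA A => p i) (continuous_apply i).continuousAt hmz) ?_
      refine Filter.Eventually.of_forall fun K => ?_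
      show toOP ((y K).1 i) = toOP (x.1 i)
      rw [hyc K i (by rw [hlen]; exact hi), pref_getElem? x m hs hi]
    have hzm : z m = OnePoint.infty := by
      cases hzc : z m using OnePoint.rec with
      | infty => rfl
      | coe c =>
        exfalso
        have hmc : MapClusterPt (z m) Filter.atTop (fun K => u K m) :=
          MapClusterPt.continuousAt_comp (f := fun p : Sig.XA A => p m) (continuous_apply m).continuousAt hmz
        have hfreq : ∃ᶠ K in Filter.atTop, u K m ∈ ({(c : OnePoint A)} : Set (OnePoint A)) :=
          mapClusterPt_iff_frequently.mp hmc _ ((op_open_coe c).mem_nhds (by rw [hzc]; rfl))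
        obtain ⟨K, hKge, hKc⟩ := Filter.frequently_atTop.mp hfreq {c}
        have hyKm : (y K).1 m = some c := toOP_eq_coe hKc
        rw [hbm K] at hyKm
        obtain rfl : b K = c := Option.some.inj hyKm
        exact hbK K (Finset.singleton_subset_iff.mp hKge)
    have hQz : Sig.Q z = x := by
      apply Subtype.ext; funext n
      rw [Q_apply]
      rcases lt_or_ge n m with hn | hn
      · rw [if_neg, hcoord n hn, toOpt_toOP]
        rintro ⟨i, hin, hiz⟩
        have hilt : i < m := lt_of_le_of_lt hin hn
        rw [hcoord i hilt] at hiz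
        exact hmin i hilt (toOP_eq_infty hiz)
      · rw [if_pos ⟨m, hn, hzm⟩]
        exact (Sig.stay_none_s3 x hn hm).symm
    have hzU : z ∈ Sig.Q ⁻¹' U := by rw [Set.mem_preimage, hQz]; exact hx
    have hfreq : ∃ᶠ K in Filter.atTop, u K ∈ Sig.Q ⁻¹' U :=
      mapClusterPt_iff_frequently.mp hmz _ (hQU.mem_nhds hzU)
    obtain ⟨K, hK⟩ := hfreq.exists
    exact hyU K (by rw [← Q_liftX (y K)]; exact hK)
  · -- `x` is an infinite sequence
    push_neg at hfin
    have hs : ∀ n, ∀ i, i < n → (x.1 i).isSome := fun n i _ =>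
      Option.ne_none_iff_isSome.mp (hfin i)
    have hch : ∀ N : ℕ, ∃ y : Sig A, y ∈ Sig.cyl (pref x N (hs N)) ∧
        (∀ a ∈ (∅ : Finset A), y ∉ Sig.cyl (pref x N (hs N) ++ [a])) ∧ y ∉ U :=
      fun N => hcon (pref x N (hs N)) ∅ (mem_cyl_pref x N (hs N)) (by simp)
    choose y hyc _ hyU using hch
    set u : ℕ → Sig.XA A := fun N => liftX (y N) with hudef
    haveI : (Filter.map u Filter.atTop).NeBot := (Filter.atTop_neBot (α := ℕ)).map u
    obtain ⟨z, hz⟩ := exists_clusterPt_of_compactSpace (Filter.map u Filter.atTop)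
    have hmz : MapClusterPt z Filter.atTop u := hz
    have hcoord : ∀ i, z i = toOP (x.1 i) := by
      intro i
      refine cluster_eq (op_closed _)
        (MapClusterPt.continuousAt_comp (f := fun p : Sig.XA A => p i) (continuous_apply i).continuousAt hmz) ?_
      refine Filter.eventually_atTop.mpr ⟨i + 1, fun N hN => ?_⟩
      show toOP ((y N).1 i) = toOP (x.1 i)
      rw [hyc N i (by rw [length_pref]; omega), pref_getElem? x N (hs N) (by omega)]
    have hQz : Sig.Q z = x := by
      apply Subtype.ext; funext n
      rw [Q_apply, if_neg, hcoord n, toOpt_toOP]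
      rintro ⟨i, _, hiz⟩
      rw [hcoord i] at hiz
      exact hfin i (toOP_eq_infty hiz)
    have hzU : z ∈ Sig.Q ⁻¹' U := by rw [Set.mem_preimage, hQz]; exact hx
    have hfreq : ∃ᶠ N in Filter.atTop, u N ∈ Sig.Q ⁻¹' U :=
      mapClusterPt_iff_frequently.mp hmz _ (hQU.mem_nhds hzU)
    obtain ⟨N, hN⟩ := hfreq.exists
    exact hyU N (by rw [← Q_liftX (y N)]; exact hN)

end Aux

/-- `α` is a topological embedding of `Σ_A` into `{0,1}^{Σ_A^fin}`. -/
theorem stmt3 (A : Type*) [Infinite A] :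
    Topology.IsEmbedding (alphaMap (A := A)) := by
  constructor
  · rw [Topology.isInducing_iff_nhds]
    intro x
    refine le_antisymm ?_ ?_
    · exact (alpha_cont.tendsto x).le_comap
    · intro s hs
      obtain ⟨O, hOs, hO, hxO⟩ := mem_nhds_iff.mp hs
      obtain ⟨w, K, hxw, hxK, hsub⟩ := exists_basic hO hxO
      refine Filter.mem_comap.mpr
        ⟨{g : List A → Bool | g w = true ∧ ∀ a ∈ K, g (w ++ [a]) = false}, ?_, ?_⟩
      · apply IsOpen.mem_nhds
        · have : {g : List A → Bool | g w = true ∧ ∀ a ∈ K, g (w ++ [a]) = false} =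
              (fun g : List A → Bool => g w) ⁻¹' {true} ∩
                ⋂ a ∈ K, (fun g : List A → Bool => g (w ++ [a])) ⁻¹' {false} := by
            ext g
            simp [Set.mem_iInter]
          rw [this]
          exact ((continuous_apply w).isOpen_preimage _ (isOpen_discrete _)).inter
            (isOpen_biInter_finset fun a _ =>
              (continuous_apply _).isOpen_preimage _ (isOpen_discrete _))
        · exact ⟨alphaMap_eq_true.mpr hxw, fun a ha => alphaMap_eq_false.mpr (hxK a ha)⟩
      · intro v hv
        exact hOs (hsub v (alphaMap_eq_true.mp hv.1) fun a ha => alphaMap_eq_false.mp (hv.2 a ha))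
  · exact alpha_injective
end
end

section
/- The collection of generalized cylinder sets {Z(x,F) : x ∈ Σ_A^fin, F ⊆ A finite} forms a basis for the topology on Σ_A. Moreover, for x ∈ Σ_A of infinite length, {Z(x₁…x_n) : n ∈ ℕ} is a neighborhood base at x, and for x of finite length, {Z(x,F) : F ⊆ A finite} is a neighborhood base at x. -/
open Topology Filter Set

noncomputable section

namespace Sig

variable {A : Type*}

-- ###### auxiliary lemmas ######


lemma stay_none_s4 (x : Sig A) {m n : ℕ} (h : x.1 m = none) (hmn : m ≤ n) : x.1 n = none := by
  induction n, hmn using Nat.le_induction with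
  | base => exact h
  | succ n hmn ih => exact x.2 n ih

def sec (x : Sig A) : XA A := fun n => x.1 n

lemma toOpt_sec (x : Sig A) (n : ℕ) : toOpt (sec x n) = x.1 n := rfl

lemma toOpt_eq_none_iff {y : OnePoint A} : toOpt y = none ↔ y = OnePoint.infty := Iff.rfl

lemma toOpt_eq_some_iff {y : OnePoint A} {a : A} : toOpt y = some a ↔ y = (a : OnePoint A) :=
  Iff.rfl

open Classical in
lemma Q_apply (y : XA A) (n : ℕ) :
    (Q y).1 n = if ∃ i ≤ n, y i = OnePoint.infty then none else toOpt (y n) := rfl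

lemma Q_sec (x : Sig A) : Q (sec x) = x := by
  apply Subtype.ext; funext n
  rw [Q_apply]
  by_cases h : ∃ i ≤ n, sec x i = OnePoint.infty
  · rw [if_pos h]
    obtain ⟨i, hi, hxi⟩ := h
    have : x.1 i = none := hxi
    exact (stay_none_s4 x this hi).symm
  · rw [if_neg h]; rfl

lemma mem_Q_preimage_cyl {y : XA A} {w : List A} :
    Q y ∈ cyl w ↔ ∀ i < w.length, toOpt (y i) = w[i]? := by
  constructor
  · intro h i hi
    have h1 := h i hi
    rw [Q_apply] at h1
    have hw : w[i]? = some w[i] := List.getElem?_eq_getElem hi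
    rw [hw] at h1 ⊢
    split at h1
    · exact absurd h1 (by simp)
    · exact h1
  · intro h i hi
    show (Q y).1 i = w[i]?
    rw [Q_apply, if_neg, h i hi]
    rintro ⟨j, hj, hj'⟩
    have h2 := h j (lt_of_le_of_lt hj hi)
    rw [show toOpt (y j) = none from hj' ▸ rfl] at h2
    rw [List.getElem?_eq_getElem (lt_of_le_of_lt hj hi)] at h2
    cases h2

lemma Q_preimage_cylF (w : List A) (F : Set A) :
    Q ⁻¹' cylF w F =
      {y : XA A | (∀ i < w.length, toOpt (y i) = w[i]?) ∧
        ∀ a ∈ F, toOpt (y w.length) ≠ some a} := by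
  ext y
  simp only [cylF, Set.mem_preimage, Set.mem_diff, Set.mem_iUnion, not_exists, Set.mem_setOf_eq]
  rw [mem_Q_preimage_cyl]
  constructor
  · rintro ⟨h1, h2⟩
    refine ⟨h1, fun a ha hsome => h2 a ha ?_⟩
    rw [mem_Q_preimage_cyl]
    intro i hi
    rw [List.length_append, List.length_singleton] at hi
    rcases Nat.lt_or_ge i w.length with h | h
    · rw [List.getElem?_append_left h]; exact h1 i h
    · have : i = w.length := by omega
      subst this
      rw [hsome]
      simp
  · rintro ⟨h1, h2⟩
    refine ⟨h1, fun a ha hmem => ?_⟩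
    rw [mem_Q_preimage_cyl] at hmem
    have := hmem w.length (by simp)
    rw [show (w ++ [a])[w.length]? = some a by simp] at this
    exact h2 a ha this


lemma isOpen_iff' {s : Set (Sig A)} : IsOpen s ↔ IsOpen (Q ⁻¹' s) :=
  isOpen_coinduced

lemma isOpen_eqSome (n : ℕ) (a : A) : IsOpen {y : XA A | toOpt (y n) = some a} := by
  letI : TopologicalSpace A := ⊥
  haveI : DiscreteTopology A := ⟨rfl⟩
  have h1 : IsOpen {(a : OnePoint A)} := by
    have := OnePoint.isOpenEmbedding_coe (X := A) |>.isOpenMap {a} (isOpen_discrete _)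
    simpa using this
  have : {y : XA A | toOpt (y n) = some a} = (fun y : XA A => y n) ⁻¹' {(a : OnePoint A)} := by
    ext y
    simp only [Set.mem_setOf_eq, Set.mem_preimage, Set.mem_singleton_iff]
    exact toOpt_eq_some_iff
  rw [this]
  exact (continuous_apply n).isOpen_preimage _ h1

lemma isClosed_eqSome (n : ℕ) (a : A) : IsClosed {y : XA A | toOpt (y n) = some a} := by
  letI : TopologicalSpace A := ⊥
  haveI : DiscreteTopology A := ⟨rfl⟩
  have h1 : IsClosed {(a : OnePoint A)} := isClosed_singleton
  have : {y : XA A | toOpt (y n) = some a} = (fun y : XA A => y n) ⁻¹' {(a : OnePoint A)} := by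
    ext y
    simp only [Set.mem_setOf_eq, Set.mem_preimage, Set.mem_singleton_iff]
    exact toOpt_eq_some_iff
  rw [this]
  exact IsClosed.preimage (continuous_apply n) h1

lemma isOpen_C (w : List A) (F : Set A) (hF : F.Finite) :
    IsOpen {y : XA A | (∀ i < w.length, toOpt (y i) = w[i]?) ∧
      ∀ a ∈ F, toOpt (y w.length) ≠ some a} := by
  have heq : {y : XA A | (∀ i < w.length, toOpt (y i) = w[i]?) ∧
      ∀ a ∈ F, toOpt (y w.length) ≠ some a} =
      (⋂ i ∈ Finset.range w.length, {y : XA A | toOpt (y i) = w[i]?}) ∩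
      ⋂ a ∈ F, {y : XA A | toOpt (y w.length) = some a}ᶜ := by
    ext y
    simp [Set.mem_iInter, Finset.mem_range]
  rw [heq]
  refine IsOpen.inter ?_ ?_
  · refine isOpen_biInter_finset fun i hi => ?_
    rw [Finset.mem_range] at hi
    rw [List.getElem?_eq_getElem hi]
    exact isOpen_eqSome i w[i]
  · exact hF.isOpen_biInter fun a _ => (isClosed_eqSome w.length a).isOpen_compl

lemma isOpen_cylF (w : List A) (F : Set A) (hF : F.Finite) : IsOpen (cylF w F) := by
  rw [isOpen_iff', Q_preimage_cylF]
  exact isOpen_C w F hF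

lemma cylF_empty (w : List A) : cylF w (∅ : Set A) = cyl w := by
  simp [cylF]

lemma isOpen_cyl (w : List A) : IsOpen (cyl w) := by
  rw [← cylF_empty]
  exact isOpen_cylF w ∅ (Set.finite_empty)

lemma ofList_mem_cylF (w : List A) (F : Set A) : ofList w ∈ cylF w F := by
  constructor
  · intro i _; rfl
  · simp only [Set.mem_iUnion, not_exists]
    intro a _ hmem
    have := hmem w.length (by simp)
    have hL : (ofList w).1 w.length = none := by
      show w[w.length]? = none
      simp
    rw [hL, show (w ++ [a])[w.length]? = some a by simp] at this
    cases this

lemma forall_ne_none_of_len_eq_top {x : Sig A} (h : len x = ⊤) (n : ℕ) : x.1 n ≠ none := by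
  intro hn
  have hmem : ((n : ℕ∞)) ∈ {m : ℕ∞ | ∃ k : ℕ, m = (k : ℕ∞) ∧ x.1 k = none} := ⟨n, rfl, hn⟩
  have := sInf_le hmem
  rw [show sInf {m : ℕ∞ | ∃ k : ℕ, m = (k : ℕ∞) ∧ x.1 k = none} = len x from rfl, h,
    top_le_iff] at this
  exact (WithTop.coe_ne_top) this

lemma exists_eq_ofList {x : Sig A} (h : len x ≠ ⊤) : ∃ w : List A, x = ofList w := by
  classical
  have hne : ∃ k : ℕ, x.1 k = none := by
    by_contra hc
    push_neg at hc
    apply h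
    rw [len, sInf_eq_top]
    rintro b ⟨k, rfl, hk⟩
    exact absurd hk (hc k)
  set m := Nat.find hne with hm_def
  have hm : x.1 m = none := Nat.find_spec hne
  have hlt : ∀ i, i < m → x.1 i ≠ none := fun i hi => Nat.find_min hne hi
  refine ⟨List.ofFn (fun i : Fin m =>
    (x.1 i).get (Option.ne_none_iff_isSome.mp (hlt i i.2))), ?_⟩
  apply Subtype.ext; funext n
  show x.1 n = (List.ofFn _)[n]?
  rcases Nat.lt_or_ge n m with hn | hn
  · simp [List.getElem?_ofFn, List.ofFnNthVal, hn]
  · rw [List.getElem?_eq_none (by simpa [List.length_ofFn] using hn)]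
    exact stay_none_s4 x hm hn

lemma exists_cyl_subset {x : Sig A} (hx : ∀ n, x.1 n ≠ none) {U : Set (Sig A)}
    (hU : IsOpen U) (hxU : x ∈ U) : ∃ w : List A, x ∈ cyl w ∧ cyl w ⊆ U := by
  letI : TopologicalSpace A := ⊥
  rw [isOpen_iff'] at hU
  have hy : sec x ∈ Q ⁻¹' U := by rw [Set.mem_preimage, Q_sec]; exact hxU
  obtain ⟨I, u, hu, hsub⟩ := isOpen_pi_iff.mp hU (sec x) hy
  set n := (I.sup id) + 1 with hn_def
  have hIn : ∀ i ∈ I, i < n := fun i hi =>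
    Nat.lt_succ_of_le (Finset.le_sup (f := id) hi)
  set w : List A := List.ofFn (fun i : Fin n =>
    (x.1 i).get (Option.ne_none_iff_isSome.mp (hx i))) with hw_def
  have hwlen : w.length = n := by simp [hw_def, hn_def]
  have hwget : ∀ i < n, w[i]? = x.1 i := by
    intro i hi
    rw [hw_def, List.getElem?_ofFn]
    simp only [List.ofFnNthVal]
    rw [dif_pos (show i < n by simpa using hi)]
    exact Option.some_get _
  refine ⟨w, ?_, ?_⟩
  · intro i hi
    rw [hwlen] at hi
    exact (hwget i hi).symm
  · intro z hz
    have hzmem : sec z ∈ (I : Set ℕ).pi u := by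
      intro i hiI
      have hi_lt : i < n := hIn i hiI
      have h1 : z.1 i = x.1 i := by
        rw [hz i (by rw [hwlen]; exact hi_lt), hwget i hi_lt]
      have h2 : sec z i = sec x i := h1
      rw [h2]
      exact (hu i hiI).2
    have := hsub hzmem
    change Q (sec z) ∈ U at this; rw [Q_sec] at this
    exact this

lemma Q_eq_ofList {y : XA A} {w : List A} (h1 : ∀ i < w.length, toOpt (y i) = w[i]?)
    (h2 : toOpt (y w.length) = none) : Q y = ofList w := by
  apply Subtype.ext; funext n
  rw [Q_apply]
  show _ = w[n]?
  rcases Nat.lt_or_ge n w.length with hn | hn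
  · rw [if_neg, h1 n hn]
    rintro ⟨j, hj, hj'⟩
    have := h1 j (lt_of_le_of_lt hj hn)
    rw [show toOpt (y j) = none from hj' ▸ rfl,
      List.getElem?_eq_getElem (lt_of_le_of_lt hj hn)] at this
    cases this
  · rw [if_pos ⟨w.length, hn, toOpt_eq_none_iff.mp h2⟩,
      List.getElem?_eq_none hn]

lemma exists_cylF_subset (w : List A) {U : Set (Sig A)} (hU : IsOpen U)
    (hxU : ofList w ∈ U) : ∃ F : Finset A, cylF w (↑F : Set A) ⊆ U := by
  classical
  letI : TopologicalSpace A := ⊥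
  haveI : DiscreteTopology A := ⟨rfl⟩
  haveI : CompactSpace (XA A) := inferInstanceAs (CompactSpace (ℕ → OnePoint A))
  rw [isOpen_iff'] at hU
  set s : Set (XA A) :=
    {y : XA A | ∀ i < w.length, toOpt (y i) = w[i]?} ∩ (Q ⁻¹' U)ᶜ with hs_def
  have hs_closed : IsClosed s := by
    refine IsClosed.inter ?_ hU.isClosed_compl
    have : {y : XA A | ∀ i < w.length, toOpt (y i) = w[i]?} =
        ⋂ i ∈ Finset.range w.length, {y : XA A | toOpt (y i) = w[i]?} := by
      ext y; simp
    rw [this]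
    refine isClosed_biInter fun i hi => ?_
    have hi' : i < w.length := Finset.mem_range.mp hi
    rw [List.getElem?_eq_getElem hi']
    exact isClosed_eqSome i w[i]
  have hs_compact : IsCompact s := hs_closed.isCompact
  set t : A → Set (XA A) := fun a => {y : XA A | toOpt (y w.length) ≠ some a} with ht_def
  have ht : ∀ a, IsClosed (t a) := fun a => (isOpen_eqSome w.length a).isClosed_compl
  have hempty : s ∩ ⋂ a, t a = ∅ := by
    ext y
    simp only [Set.mem_inter_iff, Set.mem_iInter, Set.mem_empty_iff_false, iff_false, not_and,
      hs_def, Set.mem_setOf_eq, Set.mem_compl_iff, Set.mem_preimage, ht_def]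
    rintro ⟨h1, h2⟩ hall
    apply h2
    have hnone : toOpt (y w.length) = none := by
      cases hcase : toOpt (y w.length) with
      | none => rfl
      | some a => exact absurd hcase (hall a)
    rw [Q_eq_ofList h1 hnone]
    exact hxU
  obtain ⟨F, hF⟩ := hs_compact.elim_finite_subfamily_closed t ht hempty
  refine ⟨F, fun z hz => ?_⟩
  by_contra hzU
  have hsec : sec z ∈ Q ⁻¹' cylF w ↑F := by rw [Set.mem_preimage, Q_sec]; exact hz
  rw [Q_preimage_cylF] at hsec
  have : sec z ∈ s ∩ ⋂ a ∈ F, t a := by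
    refine ⟨⟨hsec.1, ?_⟩, ?_⟩
    · rw [Set.mem_compl_iff, Set.mem_preimage, Q_sec]
      exact hzU
    · simp only [Set.mem_iInter, ht_def, Set.mem_setOf_eq]
      intro a ha
      exact hsec.2 a (by simpa using ha)
  rw [hF] at this
  exact this

end Sig



/-- the generalized cylinder sets form a basis for `Σ_A`; cylinders on
prefixes form a neighborhood base at each infinite sequence, and the sets `Z(x,F)`
form a neighborhood base at each finite sequence `x`. -/
theorem stmt4 (A : Type*) [Infinite A] :
    TopologicalSpace.IsTopologicalBasis
        {S : Set (Sig A) | ∃ (w : List A) (F : Finset A), S = Sig.cylF w (F : Set A)} ∧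
      (∀ x : Sig A, Sig.len x = ⊤ →
        (𝓝 x).HasBasis (fun w : List A => x ∈ Sig.cyl w) (fun w => Sig.cyl w)) ∧
      (∀ w : List A, (𝓝 (Sig.ofList w)).HasBasis (fun _ : Finset A => True)
        (fun F => Sig.cylF w (F : Set A))) := by
  refine ⟨?_, ?_, ?_⟩
  · apply TopologicalSpace.isTopologicalBasis_of_isOpen_of_nhds
    · rintro S ⟨w, F, rfl⟩
      exact Sig.isOpen_cylF w ↑F F.finite_toSet
    · intro x U hxU hU
      by_cases hx : Sig.len x = ⊤
      · obtain ⟨w, hxw, hsub⟩ :=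
          Sig.exists_cyl_subset (Sig.forall_ne_none_of_len_eq_top hx) hU hxU
        exact ⟨Sig.cyl w, ⟨w, ∅, by rw [Finset.coe_empty, Sig.cylF_empty]⟩, hxw, hsub⟩
      · obtain ⟨w, rfl⟩ := Sig.exists_eq_ofList hx
        obtain ⟨F, hF⟩ := Sig.exists_cylF_subset w hU hxU
        exact ⟨Sig.cylF w ↑F, ⟨w, F, rfl⟩, Sig.ofList_mem_cylF w ↑F, hF⟩
  · intro x hx
    refine ⟨fun t => ⟨fun ht => ?_, fun ⟨w, hxw, hsub⟩ => ?_⟩⟩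
    · obtain ⟨U, hUt, hU, hxU⟩ := mem_nhds_iff.mp ht
      obtain ⟨w, h1, h2⟩ :=
        Sig.exists_cyl_subset (Sig.forall_ne_none_of_len_eq_top hx) hU hxU
      exact ⟨w, h1, h2.trans hUt⟩
    · exact mem_of_superset ((Sig.isOpen_cyl w).mem_nhds hxw) hsub
  · intro w
    refine ⟨fun t => ⟨fun ht => ?_, fun ⟨F, _, hsub⟩ => ?_⟩⟩
    · obtain ⟨U, hUt, hU, hxU⟩ := mem_nhds_iff.mp ht
      obtain ⟨F, hF⟩ := Sig.exists_cylF_subset w hU hxU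
      exact ⟨F, trivial, hF.trans hUt⟩
    · exact mem_of_superset
        ((Sig.isOpen_cylF w ↑F F.finite_toSet).mem_nhds (Sig.ofList_mem_cylF w ↑F)) hsub
end
end

section
/- Let X ⊆ Σ_A be a shift space. The following are equivalent: (i) B₁(X) is finite (X is finite-symbol); (ii) X contains no finite sequences; (iii) X = X^inf; (iv) X^inf is closed in Σ_A; (v) the empty sequence 0⃗ is not a limit point of X^inf; (vi) 0⃗ ∉ X. -/
open Topology Filter Set

noncomputable section

namespace Sig

variable {A : Type*}

lemma aux_none_mono (x : Sig A) {m n : ℕ} (h : m ≤ n) (hm : x.1 m = none) : x.1 n = none := by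
  induction n, h using Nat.le_induction with
  | base => exact hm
  | succ n hmn ih => exact x.2 n ih

lemma aux_len_eq_top_iff (x : Sig A) : len x = ⊤ ↔ ∀ n, x.1 n ≠ none := by
  rw [len, sInf_eq_top]
  constructor
  · intro h n hn
    exact (ENat.coe_ne_top n) (h n ⟨n, rfl, hn⟩)
  · rintro h a ⟨k, rfl, hk⟩
    exact absurd hk (h k)

lemma aux_len_nil_ne_top : (len (nil : Sig A)) ≠ ⊤ := by
  intro h
  rw [aux_len_eq_top_iff] at h
  exact h 0 rfl

lemma aux_prefix_of_forall {l₁ l₂ : List A} (h : ∀ i, i < l₁.length → l₂[i]? = l₁[i]?) :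
    l₁ <+: l₂ := by
  rw [List.prefix_iff_eq_take]
  apply List.ext_getElem?
  intro n
  by_cases hn : n < l₁.length
  · rw [List.getElem?_take_of_lt hn, h n hn]
  · rw [List.getElem?_eq_none (le_of_not_gt hn),
      List.getElem?_eq_none (le_trans (List.length_take_le _ _) (le_of_not_gt hn))]

lemma aux_prefix_getElem? {l₁ l₂ : List A} (h : l₁ <+: l₂) {i : ℕ} (hi : i < l₁.length) :
    l₂[i]? = l₁[i]? := by
  obtain ⟨t, rfl⟩ := h
  exact List.getElem?_append_left hi

/-- Any element with a `none` entry is of the form `ofList w`. -/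
lemma aux_eq_ofList (x : Sig A) {m : ℕ} (hm : x.1 m = none) :
    ∃ w : List A, x = ofList w := by
  have hex : ∃ n, x.1 n = none := ⟨m, hm⟩
  classical
  set n₀ := Nat.find hex with hn₀
  have hmin : ∀ i, i < n₀ → x.1 i ≠ none := fun i hi => Nat.find_min hex hi
  have hsome : ∀ i : Fin n₀, (x.1 i).isSome := by
    intro i
    exact Option.ne_none_iff_isSome.1 (hmin i i.2)
  refine ⟨List.ofFn (fun i : Fin n₀ => (x.1 i).get (hsome i)), ?_⟩
  apply Subtype.ext
  funext i
  show x.1 i = (List.ofFn _)[i]?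
  rw [List.getElem?_ofFn]
  by_cases hi : i < n₀
  · rw [dif_pos hi]
    exact (Option.some_get (hsome ⟨i, hi⟩)).symm
  · rw [dif_neg hi]
    exact aux_none_mono x (le_of_not_gt hi) (Nat.find_spec hex)

lemma aux_ofList_nil : (ofList [] : Sig A) = nil := by
  apply Subtype.ext
  funext n
  rfl

/-- The canonical lift of an element of `Σ_A` to `X_A`. -/
def aux_lift (x : Sig A) : XA A := fun n => (x.1 n : Option A)

lemma aux_Q_lift (x : Sig A) : Q (aux_lift x) = x := by
  classical
  apply Subtype.ext
  funext n
  show (if ∃ i ≤ n, aux_lift x i = OnePoint.infty then none else toOpt (aux_lift x n)) = x.1 n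
  split
  · next h =>
    obtain ⟨i, hi, hxi⟩ := h
    exact (aux_none_mono x hi hxi).symm
  · rfl

lemma aux_continuous_Q : Continuous (Q : XA A → Sig A) := continuous_coinduced_rng

lemma aux_tendsto_XA {x : ℕ → XA A} {y : XA A}
    (h : ∀ i, ∀ᶠ n in atTop, x n i = y i) : Filter.Tendsto x atTop (𝓝 y) := by
  letI : TopologicalSpace A := ⊥
  have : Filter.Tendsto x atTop (𝓝 (y : ℕ → OnePoint A)) := by
    apply tendsto_pi_nhds.mpr
    intro i
    exact Filter.Tendsto.congr' ((h i).mono fun n hn => hn.symm) tendsto_const_nhds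
  exact this

/-- If infinitely many letters start elements of `S`, then `nil` is in the closure of `S`. -/
lemma aux_nil_mem_closure (S : Set (Sig A))
    (h : {a : A | (S ∩ cyl [a]).Nonempty}.Infinite) : nil ∈ closure S := by
  classical
  let e := h.natEmbedding
  have hz : ∀ n : ℕ, ∃ z, z ∈ S ∧ z.1 0 = some ((e n).1) := by
    intro n
    obtain ⟨z, hzS, hzc⟩ := (e n).2
    exact ⟨z, hzS, by simpa using hzc 0 (by simp)⟩
  choose z hzS hz0 using hz
  let zt : ℕ → XA A := fun n => aux_lift (z n)
  -- a cluster point of the sequence of lifts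
  obtain ⟨y, hy⟩ := exists_clusterPt_of_compactSpace (Filter.map zt Filter.atTop)
  -- its first coordinate must be ∞
  have hy0 : y 0 = OnePoint.infty := by
    letI : TopologicalSpace A := ⊥
    by_contra h0
    obtain ⟨b, hb⟩ : ∃ b : A, y 0 = (b : OnePoint A) :=
      Option.ne_none_iff_exists'.mp h0
    have hcont : ContinuousAt (fun f : XA A => f 0) y := (continuous_apply 0).continuousAt
    have hcl : ClusterPt (y 0) (Filter.map (fun n => zt n 0) Filter.atTop) := by
      have := hy.map hcont (Filter.tendsto_map (f := fun f : XA A => f 0))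
      rwa [Filter.map_map] at this
    have hopen : IsOpen ({(b : OnePoint A)} : Set (OnePoint A)) := by
      have hsing : ({(b : OnePoint A)} : Set (OnePoint A)) = (↑) '' {b} := by simp
      haveI : DiscreteTopology A := ⟨rfl⟩
      rw [hsing, OnePoint.isOpen_image_coe]
      exact isOpen_discrete _
    have hmem : ({(b : OnePoint A)} : Set (OnePoint A)) ∈ 𝓝 (y 0) := by
      rw [hb]; exact hopen.mem_nhds rfl
    have h1 : ∀ N : ℕ, ∃ n, N ≤ n ∧ (e n).1 = b := by
      intro N
      rw [clusterPt_iff_nonempty] at hcl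
      obtain ⟨v, hv1, hv2⟩ := hcl hmem (Filter.image_mem_map (Filter.Ici_mem_atTop N))
      obtain ⟨n, hn, rfl⟩ := hv2
      refine ⟨n, hn, ?_⟩
      have h2 : zt n 0 = (some ((e n).1) : Option A) := hz0 n
      rw [Set.mem_singleton_iff] at hv1
      have h3 : (some ((e n).1) : Option A) = some b := by rw [← h2]; exact hv1
      exact Option.some_inj.mp h3
    obtain ⟨n₁, _, hb1⟩ := h1 0
    obtain ⟨n₂, hn₂, hb2⟩ := h1 (n₁ + 1)
    have h4 : e n₁ = e n₂ := Subtype.ext (hb1.trans hb2.symm)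
    have := e.injective h4
    omega
  -- nil = Q y
  have hQy : Q y = nil := by
    classical
    apply Subtype.ext; funext n
    show (if ∃ i ≤ n, y i = OnePoint.infty then none else toOpt (y n)) = none
    split
    · rfl
    · next h => exact absurd ⟨0, Nat.zero_le n, hy0⟩ h
  have hymem : y ∈ closure (Set.range zt) :=
    mem_closure_iff_clusterPt.mpr (hy.mono (Filter.le_principal_iff.mpr Filter.range_mem_map))
  have hcl2 : Q y ∈ closure (Q '' Set.range zt) :=
    image_closure_subset_closure_image aux_continuous_Q ⟨y, hymem, rfl⟩
  rw [hQy] at hcl2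
  refine closure_mono ?_ hcl2
  rintro _ ⟨_, ⟨n, rfl⟩, rfl⟩
  rw [show zt n = aux_lift (z n) from rfl, aux_Q_lift]
  exact hzS n

lemma aux_shift_iter_apply (k : ℕ) (x : Sig A) (i : ℕ) :
    (shift^[k] x).1 i = x.1 (k + i) := by
  induction k generalizing x i with
  | zero => simp
  | succ k ih =>
    rw [Function.iterate_succ_apply, ih]
    show x.1 (k + i + 1) = x.1 (k + 1 + i)
    have h : k + i + 1 = k + 1 + i := by omega
    rw [h]

lemma aux_shift_iter_mem {X : Set (Sig A)} (hX : ∀ x ∈ X, shift x ∈ X) (k : ℕ) {x : Sig A}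
    (hx : x ∈ X) : shift^[k] x ∈ X := by
  induction k generalizing x with
  | zero => simpa using hx
  | succ k ih => rw [Function.iterate_succ_apply]; exact ih (hX x hx)

lemma aux_block_single {X : Set (Sig A)} (hX : IsShiftSpace X) {a : A}
    (h : [a] ∈ blocks X) : (X ∩ cyl [a]).Nonempty := by
  obtain ⟨x, hx, k, hk⟩ := h
  refine ⟨shift^[k] x, aux_shift_iter_mem hX.2.1 k hx, ?_⟩
  intro i hi
  have hi0 : i = 0 := by simp at hi; omega
  subst hi0
  rw [aux_shift_iter_apply]
  exact hk 0 (by simp)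

lemma aux_mem_blocks {X : Set (Sig A)} {w : List A} {a : A}
    (h : (X ∩ cyl (w ++ [a])).Nonempty) : [a] ∈ blocks X := by
  obtain ⟨y, hyX, hyc⟩ := h
  refine ⟨y, hyX, w.length, ?_⟩
  intro i hi
  have hi0 : i = 0 := by simp at hi; omega
  subst hi0
  have h1 := hyc w.length (by simp)
  rw [Nat.add_zero, h1, List.getElem?_concat_length]
  simp

lemma aux_exists_inf_ext {X : Set (Sig A)} (hX : IsShiftSpace X) (w : List A)
    (hw : ofList w ∈ X) :
    ∃ z ∈ X, len z = ⊤ ∧ ∀ i, i < w.length → z.1 i = w[i]? := by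
  classical
  by_contra H
  push_neg at H
  have step : ∀ v : List A, ofList v ∈ X → w <+: v →
      ∃ v' : List A, ofList v' ∈ X ∧ v <+: v' ∧ v.length < v'.length := by
    intro v hv hwv
    obtain ⟨a, y, hyX, hyc⟩ := (hX.2.2 v hv).nonempty
    have hwl := hwv.length_le
    have hfin : ¬ len y = ⊤ := by
      intro htop
      obtain ⟨i, hiw, hine⟩ := H y hyX htop
      apply hine
      have h1 : y.1 i = (v ++ [a])[i]? := hyc i (by simp; omega)
      rw [h1, List.getElem?_append_left (by omega), aux_prefix_getElem? hwv hiw]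
    rw [aux_len_eq_top_iff] at hfin
    push_neg at hfin
    obtain ⟨m, hm⟩ := hfin
    obtain ⟨v', rfl⟩ := aux_eq_ofList y hm
    have hyv : ∀ i, (ofList v').1 i = v'[i]? := fun i => rfl
    refine ⟨v', hyX, ?_, ?_⟩
    · apply aux_prefix_of_forall
      intro i hi
      rw [← hyv i, hyc i (by simp; omega), List.getElem?_append_left (by omega)]
    · have h2 : v'[v.length]? = some a := by
        rw [← hyv v.length, hyc v.length (by simp), List.getElem?_concat_length]
      obtain ⟨hlt, -⟩ := List.getElem?_eq_some_iff.mp h2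
      exact hlt
  have hstep' : ∀ p : {v : List A // ofList v ∈ X ∧ w <+: v},
      ∃ v' : List A, ofList v' ∈ X ∧ (p.1 <+: v') ∧ p.1.length < v'.length :=
    fun p => step p.1 p.2.1 p.2.2
  choose f hf1 hf2 hf3 using hstep'
  let c : ℕ → {v : List A // ofList v ∈ X ∧ w <+: v} := fun n =>
    Nat.rec ⟨w, hw, List.prefix_refl w⟩ (fun _ p => ⟨f p, hf1 p, p.2.2.trans (hf2 p)⟩) n
  have hc_succ : ∀ n, (c n).1 <+: (c (n+1)).1 := fun n => hf2 (c n)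
  have hc_len : ∀ n, (c n).1.length < (c (n+1)).1.length := fun n => hf3 (c n)
  have hc_mono : ∀ m n, m ≤ n → (c m).1 <+: (c n).1 := by
    intro m n h
    induction n, h using Nat.le_induction with
    | base => exact List.prefix_refl _
    | succ n hmn ih => exact ih.trans (hc_succ n)
  have hc_lb : ∀ n, n ≤ (c n).1.length := by
    intro n
    induction n with
    | zero => omega
    | succ n ih => have := hc_len n; omega
  have hlt : ∀ i : ℕ, i < (c (i+1)).1.length :=
    fun i => lt_of_lt_of_le (Nat.lt_succ_self i) (hc_lb (i+1))
  let z : Sig A := ⟨fun i => (c (i+1)).1[i]?, by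
    intro n hn
    exfalso
    rw [List.getElem?_eq_none_iff] at hn
    have := hlt n
    omega⟩
  have hz_entries : ∀ i, z.1 i ≠ none := by
    intro i hn
    have hn' : (c (i+1)).1[i]? = none := hn
    rw [List.getElem?_eq_none_iff] at hn'
    have := hlt i
    omega
  have hx_tend : Filter.Tendsto (fun n => aux_lift (ofList (c n).1)) atTop (𝓝 (aux_lift z)) := by
    apply aux_tendsto_XA
    intro i
    filter_upwards [Filter.eventually_ge_atTop (i+1)] with n hn
    show ((c n).1[i]? : Option A) = ((c (i+1)).1[i]? : Option A)
    exact aux_prefix_getElem? (hc_mono _ _ hn) (hlt i)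
  have hzX : z ∈ X := by
    have htend : Filter.Tendsto (fun n => ofList (c n).1) atTop (𝓝 z) := by
      have h3 := (aux_continuous_Q.tendsto (aux_lift z)).comp hx_tend
      simpa only [Function.comp_def, aux_Q_lift] using h3
    exact hX.1.mem_of_tendsto htend (Filter.Eventually.of_forall fun n => (c n).2.1)
  have hztop : len z = ⊤ := (aux_len_eq_top_iff z).mpr hz_entries
  obtain ⟨i, hiw, hine⟩ := H z hzX hztop
  apply hine
  show (c (i+1)).1[i]? = w[i]?
  exact aux_prefix_getElem? (c (i+1)).2.2 hiw

end Sig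

/-- characterizations of finite-symbol shift spaces. -/
theorem stmt12 (A : Type*) (X : Set (Sig A)) (hX : Sig.IsShiftSpace X) :
    ({a : A | [a] ∈ Sig.blocks X}.Finite ↔ ∀ x ∈ X, Sig.len x = ⊤) ∧
      ({a : A | [a] ∈ Sig.blocks X}.Finite ↔ X = {x ∈ X | Sig.len x = ⊤}) ∧
      ({a : A | [a] ∈ Sig.blocks X}.Finite ↔ IsClosed {x ∈ X | Sig.len x = ⊤}) ∧
      ({a : A | [a] ∈ Sig.blocks X}.Finite ↔
        Sig.nil ∉ closure {x ∈ X | Sig.len x = ⊤}) ∧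
      ({a : A | [a] ∈ Sig.blocks X}.Finite ↔ Sig.nil ∉ X) :=  by
  set B := {a : A | [a] ∈ Sig.blocks X} with hB
  have h12 : B.Finite → ∀ x ∈ X, Sig.len x = ⊤ := by
    intro hfin x hx
    by_contra hlen
    rw [Sig.aux_len_eq_top_iff] at hlen
    push_neg at hlen
    obtain ⟨m, hm⟩ := hlen
    obtain ⟨w, rfl⟩ := Sig.aux_eq_ofList x hm
    have hinf := hX.2.2 w hx
    have hsub : {a : A | (X ∩ Sig.cyl (w ++ [a])).Nonempty} ⊆ B :=
      fun a ha => Sig.aux_mem_blocks ha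
    exact (hinf.mono hsub) hfin
  have h23 : (∀ x ∈ X, Sig.len x = ⊤) → X = {x ∈ X | Sig.len x = ⊤} := by
    intro h; ext x; exact ⟨fun hx => ⟨hx, h x hx⟩, fun hx => hx.1⟩
  have h34 : X = {x ∈ X | Sig.len x = ⊤} → IsClosed {x ∈ X | Sig.len x = ⊤} := by
    intro h; rw [← h]; exact hX.1
  have h45 : IsClosed {x ∈ X | Sig.len x = ⊤} →
      Sig.nil ∉ closure {x ∈ X | Sig.len x = ⊤} := by
    intro h hmem
    rw [h.closure_eq] at hmem
    exact Sig.aux_len_nil_ne_top hmem.2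
  have h56 : Sig.nil ∉ closure {x ∈ X | Sig.len x = ⊤} → Sig.nil ∉ X := by
    intro h hnil
    apply h
    apply Sig.aux_nil_mem_closure
    have hinf := hX.2.2 [] (by rwa [Sig.aux_ofList_nil])
    refine Set.Infinite.mono ?_ hinf
    rintro a ⟨x, hxX, hxc⟩
    have hx0 : x.1 0 = some a := by
      have := hxc 0 (by simp)
      simpa using this
    by_cases htop : Sig.len x = ⊤
    · exact ⟨x, ⟨hxX, htop⟩, fun i hi => by
        have hi0 : i = 0 := by simp at hi; omega
        subst hi0; simpa using hx0⟩
    · rw [Sig.aux_len_eq_top_iff] at htop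
      push_neg at htop
      obtain ⟨m, hm⟩ := htop
      obtain ⟨w, rfl⟩ := Sig.aux_eq_ofList x hm
      obtain ⟨z, hzX, hztop, hzw⟩ := Sig.aux_exists_inf_ext hX w hxX
      have h0w : 0 < w.length := by
        by_contra h0
        have : w[0]? = none := List.getElem?_eq_none (by omega)
        rw [show (Sig.ofList w).1 0 = w[0]? from rfl, this] at hx0
        exact absurd hx0 (by simp)
      refine ⟨z, ⟨hzX, hztop⟩, fun i hi => ?_⟩
      have hi0 : i = 0 := by simp at hi; omega
      subst hi0
      rw [hzw 0 h0w]
      exact hx0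
  have h61 : Sig.nil ∉ X → B.Finite := by
    intro h
    by_contra hfin
    have hBinf : B.Infinite := hfin
    apply h
    have hmem : Sig.nil ∈ closure X := by
      apply Sig.aux_nil_mem_closure
      refine Set.Infinite.mono ?_ hBinf
      intro a ha
      exact Sig.aux_block_single hX ha
    rwa [hX.1.closure_eq] at hmem
  have g6 : Sig.nil ∉ X → B.Finite := h61
  have g5 : Sig.nil ∉ closure {x ∈ X | Sig.len x = ⊤} → B.Finite := fun h => g6 (h56 h)
  have g4 : IsClosed {x ∈ X | Sig.len x = ⊤} → B.Finite := fun h => g5 (h45 h)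
  have g3 : X = {x ∈ X | Sig.len x = ⊤} → B.Finite := fun h => g4 (h34 h)
  have g2 : (∀ x ∈ X, Sig.len x = ⊤) → B.Finite := fun h => g3 (h23 h)
  have f2 := h12
  have f3 := fun h => h23 (f2 h)
  have f4 := fun h => h34 (f3 h)
  have f5 := fun h => h45 (f4 h)
  have f6 := fun h => h56 (f5 h)
  exact ⟨⟨f2, g2⟩, ⟨f3, g3⟩, ⟨f4, g4⟩, ⟨f5, g5⟩, ⟨f6, g6⟩⟩
end
end
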